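/- arXiv:2003.05552 — 4 statements merged into one kernel-verified Lean document; each statement's English description precedes it below -/
import Mathlib

section
/- Let α > 0 and let θ be a quaternion with ‖θ‖ < 1. Let f : (0,∞) → ℍ be measurable with ∫₀^∞ ‖f(x)‖² x^α e^{-x} dx < ∞, and for each n ∈ ℕ set c_n = ∫₀^∞ φ_n^{α}(x)·f(x) x^α e^{-x} dx ∈ ℍ. Then the series ∑_{n=0}^∞ ‖θ^n · c_n‖² converges and ∑_{n=0}^∞ ‖θ^n · c_n‖² ≤ (1 − ‖θ‖²)^{-1} · ∫₀^∞ ‖f(x)‖² x^α e^{-x} dx. (Thus the fractional transform f ↦ ∑ φ_n^{α} θ^n c_n is a continuous k-contraction of L²(μ_α) with k ≤ (1 − ‖θ‖²)^{-1/2}.) -/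
open MeasureTheory Set Quaternion

/-- Generalized Laguerre polynomial `L_n^{(α)}(x)`. -/
noncomputable def lagPoly (α : ℝ) (n : ℕ) (x : ℝ) : ℝ :=
  ∑ k ∈ Finset.range (n + 1),
    (-1 : ℝ) ^ k / ((Nat.factorial k : ℝ) * (Nat.factorial (n - k) : ℝ)) *
      (Real.Gamma (n + α + 1) / Real.Gamma (k + α + 1)) * x ^ k

/-- Normalized Laguerre function `φ_n^{α}(x)`. -/
noncomputable def lagFun (α : ℝ) (n : ℕ) (x : ℝ) : ℝ :=
  Real.sqrt ((Nat.factorial n : ℝ) / Real.Gamma (α + n + 1)) * lagPoly α n x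

/-!
Expanding `L_n^{(α)}` in monomials and integrating against the moments
`∫ x^m x^α e^{-x} dx = Γ(m+α+1)`, the integral of `L_n^{(α)}(x) x^k` becomes an `n`-th forward
difference of the rising factorial `t ↦ (t+α+1)_k`, a polynomial of degree `k`. It vanishes for
`k < n` and equals `(-1)^n n!` times the leading coefficient for `k = n`; this gives
`‖φ_n^{α}‖ = 1` in `L²(μ_α)`. Cauchy–Schwarz then bounds every `‖c_n‖²` by `∫ ‖f‖² dμ_α`, and the
claim follows by summing the geometric series `∑ ‖θ‖^{2n}`.
-/

open Finset Polynomial Nat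

theorem Polynomial.sum_range_neg_one_pow_mul_choose_mul_eval {R : Type*} [CommRing R] (P : R[X])
    {n : ℕ} (hP : P.natDegree ≤ n) :
    ∑ j ∈ range (n + 1), (-1) ^ j * (n.choose j : R) * P.eval (j : R)
      = (-1) ^ n * n ! * P.coeff n := by
  have hdiff : (fwdDiff 1)^[n] P.eval 0 = n ! * P.coeff n := by
    rcases hP.lt_or_eq with hlt | rfl
    · rw [P.fwdDiff_iter_eq_zero_of_degree_lt hlt, coeff_eq_zero_of_natDegree_lt hlt]
      simp
    · rw [P.fwdDiff_iter_degree_eq_factorial]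
      simp [mul_comm]
  rw [fwdDiff_iter_eq_sum_shift] at hdiff
  rw [mul_assoc, ← hdiff, mul_sum]
  refine sum_congr rfl fun j hj => ?_
  obtain ⟨m, rfl⟩ := Nat.exists_eq_add_of_le (Nat.lt_succ_iff.mp (mem_range.mp hj))
  simp only [Nat.add_sub_cancel_left, zsmul_eq_mul, pow_add, nsmul_eq_mul, mul_one, zero_add]
  push_cast
  have hsq : (-1 : R) ^ m * (-1) ^ m = 1 := by rw [← mul_pow, neg_one_mul, neg_neg, one_pow]
  linear_combination (-((-1) ^ j * ((j + m).choose j : R) * P.eval (j : R))) * hsq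

theorem Real.Gamma_add_nat_eq_mul_ascPochhammer {x : ℝ} (hx : 0 < x) (k : ℕ) :
    Real.Gamma (x + k) = Real.Gamma x * (ascPochhammer ℝ k).eval x := by
  induction k with
  | zero => simp
  | succ k ih =>
    rw [Nat.cast_succ, ← add_assoc, Real.Gamma_add_one (by positivity), ih,
      ascPochhammer_succ_eval]
    ring

theorem sum_neg_one_pow_mul_choose_mul_ascPochhammer_eval_add (a : ℝ) {n k : ℕ} (hk : k ≤ n) :
    ∑ j ∈ range (n + 1), (-1) ^ j * (n.choose j : ℝ) * (ascPochhammer ℝ k).eval (j + a)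
      = if k = n then (-1 : ℝ) ^ n * n ! else 0 := by
  have hmonic : ((ascPochhammer ℝ k).comp (X + C a)).Monic :=
    (monic_ascPochhammer ℝ k).comp_X_add_C a
  have hdeg : ((ascPochhammer ℝ k).comp (X + C a)).natDegree = k := by
    rw [natDegree_comp, ascPochhammer_natDegree, natDegree_X_add_C, mul_one]
  have hlead : ((ascPochhammer ℝ k).comp (X + C a)).coeff k = 1 := by
    simpa only [hdeg] using hmonic.coeff_natDegree
  have := sum_range_neg_one_pow_mul_choose_mul_eval _ (hdeg.trans_le hk)
  simp only [eval_comp, eval_add, eval_X, eval_C] at this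
  rw [this]
  split_ifs with hkn
  · rw [← hkn, hlead, mul_one]
  · rw [coeff_eq_zero_of_natDegree_lt (by omega), mul_zero]

section CauchySchwarz

variable {X E : Type*} [MeasurableSpace X] [NormedAddCommGroup E] [NormedSpace ℝ E]
  {μ : Measure X}

theorem norm_integral_smul_sq_le {g : X → ℝ} {f : X → E} (hg : MemLp g 2 μ) (hf : MemLp f 2 μ) :
    ‖∫ x, g x • f x ∂μ‖ ^ 2 ≤ (∫ x, g x ^ 2 ∂μ) * ∫ x, ‖f x‖ ^ 2 ∂μ := by
  have holder := integral_mul_le_Lp_mul_Lq_of_nonneg Real.HolderConjugate.two_two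
    (ae_of_all _ fun x ↦ abs_nonneg (g x)) (ae_of_all _ fun x ↦ norm_nonneg (f x))
    (by rw [ENNReal.ofReal_ofNat]; exact hg.abs) (by rw [ENNReal.ofReal_ofNat]; exact hf.norm)
  simp only [Real.rpow_two, sq_abs, ← Real.sqrt_eq_rpow] at holder
  have hnorm : ‖∫ x, g x • f x ∂μ‖ ≤ ∫ x, |g x| * ‖f x‖ ∂μ :=
    norm_integral_le_of_norm_le (hg.norm.integrable_mul hf.norm) (ae_of_all _ fun x ↦ by
      rw [norm_smul, Real.norm_eq_abs])
  calc ‖∫ x, g x • f x ∂μ‖ ^ 2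
      ≤ (√(∫ x, g x ^ 2 ∂μ) * √(∫ x, ‖f x‖ ^ 2 ∂μ)) ^ 2 :=
        pow_le_pow_left₀ (norm_nonneg _) (hnorm.trans holder) 2
    _ = (∫ x, g x ^ 2 ∂μ) * ∫ x, ‖f x‖ ^ 2 ∂μ := by
        rw [mul_pow, Real.sq_sqrt (integral_nonneg fun x ↦ sq_nonneg _),
          Real.sq_sqrt (integral_nonneg fun x ↦ sq_nonneg _)]

theorem norm_integral_mul_smul_sq_le {w g : X → ℝ} {f : X → E} (hw : ∀ᵐ x ∂μ, 0 ≤ w x)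
    (hw_meas : AEStronglyMeasurable w μ) (hg : AEStronglyMeasurable g μ)
    (hf : AEStronglyMeasurable f μ) (hgw : Integrable (fun x ↦ g x ^ 2 * w x) μ)
    (hfw : Integrable (fun x ↦ ‖f x‖ ^ 2 * w x) μ) :
    ‖∫ x, (g x * w x) • f x ∂μ‖ ^ 2
      ≤ (∫ x, g x ^ 2 * w x ∂μ) * ∫ x, ‖f x‖ ^ 2 * w x ∂μ := by
  have hs : AEStronglyMeasurable (fun x ↦ √(w x)) μ :=
    Real.continuous_sqrt.comp_aestronglyMeasurable hw_meas
  have hg_sq : (fun x ↦ (g x * √(w x)) ^ 2) =ᵐ[μ] fun x ↦ g x ^ 2 * w x := by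
    filter_upwards [hw] with x hx
    rw [mul_pow, Real.sq_sqrt hx]
  have hf_sq : (fun x ↦ ‖√(w x) • f x‖ ^ 2) =ᵐ[μ] fun x ↦ ‖f x‖ ^ 2 * w x := by
    filter_upwards [hw] with x hx
    rw [norm_smul, mul_pow, Real.norm_eq_abs, sq_abs, Real.sq_sqrt hx, mul_comm]
  have hprod : (fun x ↦ (g x * √(w x)) • √(w x) • f x) =ᵐ[μ] fun x ↦ (g x * w x) • f x := by
    filter_upwards [hw] with x hx
    rw [smul_smul, mul_assoc, Real.mul_self_sqrt hx]
  have := norm_integral_smul_sq_le (g := fun x ↦ g x * √(w x)) (f := fun x ↦ √(w x) • f x)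
    ((memLp_two_iff_integrable_sq (hg.mul hs)).2 (hgw.congr hg_sq.symm))
    ((memLp_two_iff_integrable_sq_norm (hs.smul hf)).2 (hfw.congr hf_sq.symm))
  rwa [integral_congr_ae hg_sq, integral_congr_ae hf_sq, integral_congr_ae hprod] at this

end CauchySchwarz

theorem summable_and_tsum_le_of_le_geometric {a : ℕ → ℝ} {r B : ℝ} (ha : ∀ n, 0 ≤ a n)
    (hr₀ : 0 ≤ r) (hr₁ : r < 1) (h : ∀ n, a n ≤ r ^ n * B) :
    Summable a ∧ ∑' n, a n ≤ (1 - r)⁻¹ * B := by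
  have hgeom : Summable fun n ↦ r ^ n * B := (summable_geometric_of_lt_one hr₀ hr₁).mul_right B
  have ha_sum : Summable a := .of_nonneg_of_le ha h hgeom
  refine ⟨ha_sum, (ha_sum.tsum_le_tsum h hgeom).trans_eq ?_⟩
  rw [tsum_mul_right, tsum_geometric_of_lt_one hr₀ hr₁]

namespace Laguerre

noncomputable def weight (α x : ℝ) : ℝ := x ^ α * Real.exp (-x)

noncomputable def coef (α : ℝ) (n k : ℕ) : ℝ :=
  (-1 : ℝ) ^ k / ((k ! : ℝ) * ((n - k)! : ℝ)) * (Real.Gamma (n + α + 1) / Real.Gamma (k + α + 1))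

theorem lagPoly_eq_sum (α : ℝ) (n : ℕ) (x : ℝ) :
    lagPoly α n x = ∑ k ∈ range (n + 1), coef α n k * x ^ k := rfl

variable {α : ℝ}

theorem natCast_add_add_one_pos (hα : -1 < α) (m : ℕ) : 0 < (m : ℝ) + α + 1 := by
  have := m.cast_nonneg (α := ℝ)
  linarith

theorem integrableOn_pow_mul_weight (hα : -1 < α) (m : ℕ) :
    IntegrableOn (fun x ↦ x ^ m * weight α x) (Ioi 0) := by
  refine (Real.GammaIntegral_convergent (natCast_add_add_one_pos hα m)).congr_fun
    (fun x (hx : 0 < x) ↦ ?_) measurableSet_Ioi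
  beta_reduce
  rw [weight, add_sub_cancel_right, Real.rpow_add hx, Real.rpow_natCast]
  ring

theorem integral_pow_mul_weight (hα : -1 < α) (m : ℕ) :
    ∫ x in Ioi 0, x ^ m * weight α x = Real.Gamma (m + α + 1) := by
  rw [Real.Gamma_eq_integral (natCast_add_add_one_pos hα m)]
  refine setIntegral_congr_fun measurableSet_Ioi fun x (hx : 0 < x) ↦ ?_
  rw [weight, add_sub_cancel_right, Real.rpow_add hx, Real.rpow_natCast]
  ring

theorem coef_mul_Gamma (hα : -1 < α) {n j : ℕ} (hj : j ≤ n) (k : ℕ) :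
    coef α n j * Real.Gamma ((j + k : ℕ) + α + 1) = Real.Gamma (n + α + 1) / n ! *
      ((-1) ^ j * (n.choose j : ℝ) * (ascPochhammer ℝ k).eval (j + (α + 1))) := by
  have hpos : 0 < (j : ℝ) + (α + 1) := by linarith [natCast_add_add_one_pos hα j]
  rw [show ((j + k : ℕ) : ℝ) + α + 1 = j + (α + 1) + k by push_cast; ring,
    Real.Gamma_add_nat_eq_mul_ascPochhammer hpos, Nat.cast_choose ℝ hj, coef]
  rw [show (j : ℝ) + α + 1 = j + (α + 1) by ring]
  have := (Real.Gamma_pos_of_pos hpos).ne'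
  field_simp

theorem lagPoly_mul_pow_mul_weight (n k : ℕ) (x : ℝ) :
    lagPoly α n x * x ^ k * weight α x
      = ∑ j ∈ range (n + 1), coef α n j * (x ^ (j + k) * weight α x) := by
  rw [lagPoly_eq_sum, sum_mul, sum_mul]
  exact sum_congr rfl fun j _ ↦ by ring

theorem integrableOn_lagPoly_mul_pow_mul_weight (hα : -1 < α) (n k : ℕ) :
    IntegrableOn (fun x ↦ lagPoly α n x * x ^ k * weight α x) (Ioi 0) := by
  simp_rw [lagPoly_mul_pow_mul_weight]
  exact integrable_finsetSum _ fun j _ ↦ (integrableOn_pow_mul_weight hα _).const_mul _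

theorem integral_lagPoly_mul_pow_mul_weight (hα : -1 < α) {n k : ℕ} (hk : k ≤ n) :
    ∫ x in Ioi 0, lagPoly α n x * x ^ k * weight α x
      = if k = n then (-1) ^ n * Real.Gamma (n + α + 1) else 0 := by
  simp_rw [lagPoly_mul_pow_mul_weight]
  rw [integral_finsetSum _ fun j _ ↦ (integrableOn_pow_mul_weight hα _).const_mul _]
  simp_rw [integral_const_mul, integral_pow_mul_weight hα]
  rw [sum_congr rfl fun j hj ↦ coef_mul_Gamma hα (Nat.lt_succ_iff.mp (mem_range.mp hj)) k,
    ← mul_sum, sum_neg_one_pow_mul_choose_mul_ascPochhammer_eval_add _ hk]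
  split_ifs
  · field_simp
  · rw [mul_zero]

theorem lagPoly_sq_mul_weight (n : ℕ) (x : ℝ) :
    lagPoly α n x ^ 2 * weight α x
      = ∑ k ∈ range (n + 1), coef α n k * (lagPoly α n x * x ^ k * weight α x) := by
  rw [sq]
  nth_rw 2 [lagPoly_eq_sum]
  rw [mul_sum, sum_mul]
  exact sum_congr rfl fun k _ ↦ by ring

theorem integrableOn_lagPoly_sq_mul_weight (hα : -1 < α) (n : ℕ) :
    IntegrableOn (fun x ↦ lagPoly α n x ^ 2 * weight α x) (Ioi 0) := by
  simp_rw [lagPoly_sq_mul_weight]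
  exact integrable_finsetSum _ fun k _ ↦
    (integrableOn_lagPoly_mul_pow_mul_weight hα n k).const_mul _

theorem integral_lagPoly_sq_mul_weight (hα : -1 < α) (n : ℕ) :
    ∫ x in Ioi 0, lagPoly α n x ^ 2 * weight α x = Real.Gamma (n + α + 1) / n ! := by
  simp_rw [lagPoly_sq_mul_weight]
  rw [integral_finsetSum _ fun k _ ↦
    (integrableOn_lagPoly_mul_pow_mul_weight hα n k).const_mul _]
  simp_rw [integral_const_mul]
  rw [sum_eq_single_of_mem n (self_mem_range_succ n) fun k hk hkn ↦ by
    rw [integral_lagPoly_mul_pow_mul_weight hα (Nat.lt_succ_iff.mp (mem_range.mp hk)),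
      if_neg hkn, mul_zero]]
  rw [integral_lagPoly_mul_pow_mul_weight hα le_rfl, if_pos rfl, coef, Nat.sub_self]
  have := (Real.Gamma_pos_of_pos (natCast_add_add_one_pos hα n)).ne'
  field_simp
  rw [factorial_zero, cast_one, ← pow_mul, pow_mul', neg_one_sq, one_pow]

theorem lagFun_sq (hα : -1 < α) (n : ℕ) (x : ℝ) :
    lagFun α n x ^ 2 = n ! / Real.Gamma (n + α + 1) * lagPoly α n x ^ 2 := by
  rw [lagFun, mul_pow, Real.sq_sqrt, add_comm α]
  exact div_nonneg n !.cast_nonneg (Real.Gamma_pos_of_pos (by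
    linarith [natCast_add_add_one_pos hα n])).le

theorem integrableOn_lagFun_sq_mul_weight (hα : -1 < α) (n : ℕ) :
    IntegrableOn (fun x ↦ lagFun α n x ^ 2 * weight α x) (Ioi 0) := by
  simp_rw [lagFun_sq hα, mul_assoc]
  exact (integrableOn_lagPoly_sq_mul_weight hα n).const_mul _

theorem integral_lagFun_sq_mul_weight (hα : -1 < α) (n : ℕ) :
    ∫ x in Ioi 0, lagFun α n x ^ 2 * weight α x = 1 := by
  simp_rw [lagFun_sq hα, mul_assoc]
  rw [integral_const_mul, integral_lagPoly_sq_mul_weight hα]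
  have := (Real.Gamma_pos_of_pos (natCast_add_add_one_pos hα n)).ne'
  field_simp

theorem measurable_weight (α : ℝ) : Measurable (weight α) := by
  unfold weight
  fun_prop

theorem measurable_lagFun (α : ℝ) (n : ℕ) : Measurable (lagFun α n) := by
  unfold lagFun lagPoly
  fun_prop

theorem norm_integral_lagFun_smul_sq_le {E : Type*} [NormedAddCommGroup E] [NormedSpace ℝ E]
    (hα : -1 < α) (n : ℕ) {f : ℝ → E} (hf : AEStronglyMeasurable f (volume.restrict (Ioi 0)))
    (hfw : IntegrableOn (fun x ↦ ‖f x‖ ^ 2 * weight α x) (Ioi 0)) :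
    ‖∫ x in Ioi 0, (lagFun α n x * weight α x) • f x‖ ^ 2
      ≤ ∫ x in Ioi 0, ‖f x‖ ^ 2 * weight α x := by
  have hw : ∀ᵐ x ∂volume.restrict (Ioi 0), 0 ≤ weight α x := by
    filter_upwards [ae_restrict_mem measurableSet_Ioi] with x (hx : 0 < x)
    exact mul_nonneg (Real.rpow_nonneg hx.le α) (Real.exp_pos _).le
  simpa only [integral_lagFun_sq_mul_weight hα, one_mul] using
    norm_integral_mul_smul_sq_le hw (measurable_weight α).aestronglyMeasurable
      (measurable_lagFun α n).aestronglyMeasurable hf (integrableOn_lagFun_sq_mul_weight hα n) hfw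

end Laguerre

/-- for `‖θ‖ < 1` the quaternionic fractional transform is a
`k`-contraction with `k ≤ (1 - ‖θ‖²)^{-1/2}`, in coefficient form. -/
theorem stmt0 (α : ℝ) (hα : 0 < α) (θ : ℍ[ℝ]) (hθ : ‖θ‖ < 1)
    (f : ℝ → ℍ[ℝ]) (hfmeas : StronglyMeasurable f)
    (hfint : IntegrableOn (fun x => ‖f x‖ ^ 2 * (x ^ α * Real.exp (-x))) (Ioi 0))
    (c : ℕ → ℍ[ℝ])
    (hc : ∀ n, c n = ∫ x in Ioi (0 : ℝ), (lagFun α n x * (x ^ α * Real.exp (-x))) • f x) :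
    Summable (fun n : ℕ => ‖θ ^ n * c n‖ ^ 2) ∧
      ∑' n : ℕ, ‖θ ^ n * c n‖ ^ 2 ≤
        (1 - ‖θ‖ ^ 2)⁻¹ * ∫ x in Ioi (0 : ℝ), ‖f x‖ ^ 2 * (x ^ α * Real.exp (-x)) := by
  refine summable_and_tsum_le_of_le_geometric (fun n ↦ sq_nonneg _) (sq_nonneg _)
    (pow_lt_one₀ (norm_nonneg θ) hθ two_ne_zero) fun n ↦ ?_
  rw [norm_mul, norm_pow, mul_pow, ← pow_mul, ← pow_mul', hc n]
  exact mul_le_mul_of_nonneg_left (Laguerre.norm_integral_lagFun_smul_sq_le (by linarith) n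
    hfmeas.aestronglyMeasurable hfint) (by positivity)
end

section
/- Let α > 0, N ∈ ℕ, and for θ ∈ ℍ define the truncated fractional transform (T_θ g)(y) = ∑_{m=0}^N φ_m^{α}(y)·θ^m·(∫₀^∞ φ_m^{α}(x)·g(x) x^α e^{-x} dx) for square-integrable g : (0,∞) → ℍ. If θ, η ∈ ℍ commute (θ·η = η·θ), then for every f of the form f(x) = ∑_{n=0}^N φ_n^{α}(x)·c_n with c_0,…,c_N ∈ ℍ one has T_θ(T_η f) = T_{θη} f = T_η(T_θ f) pointwise on (0,∞). (Semi-group property of the fractional Hankel transforms for θ, η in a common slice ℂ_I of ℍ.) -/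
open MeasureTheory Set Quaternion

/-- The truncated quaternionic fractional Hankel transform `T_θ` of order `N`. -/
noncomputable def fracT (α : ℝ) (N : ℕ) (θ : ℍ[ℝ]) (g : ℝ → ℍ[ℝ]) (y : ℝ) : ℍ[ℝ] :=
  ∑ m ∈ Finset.range (N + 1),
    (lagFun α m y : ℍ[ℝ]) * θ ^ m *
      ∫ x in Ioi (0 : ℝ), (lagFun α m x * (x ^ α * Real.exp (-x))) • g x

noncomputable def altSum (n k : ℕ) (β : ℝ) : ℝ :=
  ∑ j ∈ Finset.range (n+1), (-1:ℝ)^j * (n.choose j) *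
    ∏ i ∈ Finset.range k, (β + j + i)

lemma F_succ (n : ℕ) (g : ℕ → ℝ) :
    ∑ j ∈ Finset.range (n+2), (-1:ℝ)^j * ((n+1).choose j) * g j
    = ∑ j ∈ Finset.range (n+1), (-1:ℝ)^j * (n.choose j) * g j
      - ∑ j ∈ Finset.range (n+1), (-1:ℝ)^j * (n.choose j) * g (j+1) := by
  rw [Finset.sum_range_succ' (fun j => (-1:ℝ)^j * ((n+1).choose j) * g j) (n+1)]
  rw [Finset.sum_range_succ' (fun j => (-1:ℝ)^j * (n.choose j) * g j) n]
  have key : ∑ k ∈ Finset.range (n+1), (-1:ℝ)^(k+1) * ((n+1).choose (k+1)) * g (k+1)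
      = ∑ k ∈ Finset.range (n+1), (-1:ℝ)^(k+1) * (n.choose (k+1)) * g (k+1)
        - ∑ k ∈ Finset.range (n+1), (-1:ℝ)^k * (n.choose k) * g (k+1) := by
    rw [← Finset.sum_sub_distrib]
    apply Finset.sum_congr rfl
    intro k _
    have : ((n+1).choose (k+1) : ℝ) = (n.choose k : ℝ) + (n.choose (k+1) : ℝ) := by
      push_cast [Nat.choose_succ_succ]; ring
    rw [this]; ring
  have last : ∑ k ∈ Finset.range (n+1), (-1:ℝ)^(k+1) * (n.choose (k+1)) * g (k+1)
      = ∑ k ∈ Finset.range n, (-1:ℝ)^(k+1) * (n.choose (k+1)) * g (k+1) := by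
    rw [Finset.sum_range_succ]
    simp [Nat.choose_succ_self]
  rw [key, last]
  simp
  ring

lemma altSum_succ (n k : ℕ) (β : ℝ) :
    altSum (n+1) (k+1) β = -(k+1) * altSum n k (β+1) := by
  unfold altSum
  have h2 : (n + 1) + 1 = n + 2 := rfl
  rw [h2, F_succ n (fun j => ∏ i ∈ Finset.range (k+1), (β + j + i))]
  rw [Finset.mul_sum, ← Finset.sum_sub_distrib]
  apply Finset.sum_congr rfl
  intro j _
  have hp1 : ∏ i ∈ Finset.range (k+1), (β + (j:ℝ) + i)
      = (β + j) * ∏ i ∈ Finset.range k, (β + 1 + j + i) := by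
    rw [Finset.prod_range_succ' (fun i => (β + (j:ℝ) + i)) k]
    simp only [Nat.cast_zero, add_zero]
    rw [mul_comm]
    congr 1
    apply Finset.prod_congr rfl
    intro i _; push_cast; ring
  have hp2 : ∏ i ∈ Finset.range (k+1), (β + ((j:ℝ)+1) + i)
      = (β + 1 + j + k) * ∏ i ∈ Finset.range k, (β + 1 + j + i) := by
    rw [Finset.prod_range_succ]
    rw [mul_comm]
    congr 1
    · ring
    · apply Finset.prod_congr rfl
      intro i _; ring
  have hcast : ∀ j : ℕ, ((j+1 : ℕ) : ℝ) = (j:ℝ) + 1 := by intro j; push_cast; ring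
  simp only [hcast, hp1, hp2]
  ring

lemma altSum_of_lt (n k : ℕ) (hk : k < n) : ∀ β : ℝ, altSum n k β = 0 := by
  induction n generalizing k with
  | zero => omega
  | succ n ih =>
    intro β
    cases k with
    | zero =>
      unfold altSum
      simp only [Finset.range_zero, Finset.prod_empty, mul_one]
      have := Int.alternating_sum_range_choose (n := n+1)
      rw [if_neg (Nat.succ_ne_zero n)] at this
      have : ((∑ m ∈ Finset.range (n+1+1), (-1:ℤ)^m * ((n+1).choose m) : ℤ) : ℝ) = 0 := by
        rw [this]; norm_num
      push_cast at this
      convert this using 2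
    | succ k =>
      rw [altSum_succ]
      rw [ih k (by omega) (β+1)]
      ring

lemma altSum_diag (n : ℕ) : ∀ β : ℝ, altSum n n β = (-1:ℝ)^n * (n.factorial) := by
  induction n with
  | zero => intro β; simp [altSum]
  | succ n ih =>
    intro β
    rw [altSum_succ, ih (β+1)]
    rw [Nat.factorial_succ]
    push_cast
    ring

lemma Gamma_add_nat (x : ℝ) (hx : 0 < x) (k : ℕ) :
    Real.Gamma (x + k) = Real.Gamma x * ∏ i ∈ Finset.range k, (x + i) := by
  induction k with
  | zero => simp
  | succ k ih =>
    have h1 : x + (k+1 : ℕ) = (x + k) + 1 := by push_cast; ring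
    rw [h1, Real.Gamma_add_one (by positivity), ih, Finset.prod_range_succ]
    ring

lemma weight_eq (α : ℝ) (k j : ℕ) {x : ℝ} (hx : x ∈ Ioi (0:ℝ)) :
    Real.exp (-x) * x ^ (((k:ℝ) + j + α + 1) - 1) = x ^ k * x ^ j * (x ^ α * Real.exp (-x)) := by
  have hx' : (0:ℝ) < x := hx
  have h1 : ((k:ℝ) + j + α + 1) - 1 = (k:ℝ) + ((j:ℝ) + α) := by ring
  rw [h1, Real.rpow_add hx', Real.rpow_add hx', Real.rpow_natCast, Real.rpow_natCast]
  ring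

lemma integrable_pw (α : ℝ) (hα : 0 < α) (k j : ℕ) :
    IntegrableOn (fun x : ℝ => x ^ k * x ^ j * (x ^ α * Real.exp (-x))) (Ioi 0) := by
  have hs : (0:ℝ) < (k:ℝ) + j + α + 1 := by positivity
  exact (Real.GammaIntegral_convergent hs).congr_fun
    (fun x hx => weight_eq α k j hx) measurableSet_Ioi

lemma integral_pw (α : ℝ) (hα : 0 < α) (k j : ℕ) :
    ∫ x in Ioi (0:ℝ), x ^ k * x ^ j * (x ^ α * Real.exp (-x))
      = Real.Gamma ((k:ℝ) + j + α + 1) := by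
  have hs : (0:ℝ) < (k:ℝ) + j + α + 1 := by positivity
  rw [Real.Gamma_eq_integral hs]
  exact (setIntegral_congr_fun measurableSet_Ioi (fun x hx => (weight_eq α k j hx))).symm

noncomputable def lagC (α : ℝ) (n k : ℕ) : ℝ :=
  (-1 : ℝ) ^ k / ((Nat.factorial k : ℝ) * (Nat.factorial (n - k) : ℝ)) *
    (Real.Gamma (n + α + 1) / Real.Gamma (k + α + 1))

lemma lagPoly_eq (α : ℝ) (n : ℕ) (x : ℝ) :
    lagPoly α n x = ∑ k ∈ Finset.range (n + 1), lagC α n k * x ^ k := rfl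

lemma lagC_gamma (α : ℝ) (hα : 0 < α) (n j k : ℕ) (hj : j ≤ n) :
    lagC α n j * Real.Gamma ((k:ℝ) + j + α + 1)
      = Real.Gamma (n + α + 1) / n.factorial *
          ((-1:ℝ)^j * (n.choose j) * ∏ i ∈ Finset.range k, ((α+1) + j + i)) := by
  have hb : (0:ℝ) < (j:ℝ) + α + 1 := by positivity
  have harg : (k:ℝ) + j + α + 1 = ((j:ℝ) + α + 1) + k := by ring
  rw [harg, Gamma_add_nat _ hb k]
  have hprod : ∏ i ∈ Finset.range k, ((j:ℝ) + α + 1 + i)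
      = ∏ i ∈ Finset.range k, ((α+1) + j + i) :=
    Finset.prod_congr rfl (fun i _ => by ring)
  rw [hprod]
  unfold lagC
  have hfac : ((n.choose j : ℝ)) * (j.factorial : ℝ) * ((n-j).factorial : ℝ)
      = (n.factorial : ℝ) := by
    exact_mod_cast congrArg (Nat.cast (R := ℝ)) (Nat.choose_mul_factorial_mul_factorial hj)
  have h1 : (j.factorial : ℝ) ≠ 0 := Nat.cast_ne_zero.2 j.factorial_ne_zero
  have h2 : ((n-j).factorial : ℝ) ≠ 0 := Nat.cast_ne_zero.2 (n-j).factorial_ne_zero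
  have h3 : (n.factorial : ℝ) ≠ 0 := Nat.cast_ne_zero.2 n.factorial_ne_zero
  have h4 : Real.Gamma ((j:ℝ) + α + 1) ≠ 0 := ne_of_gt (Real.Gamma_pos_of_pos hb)
  have h5 : ((j:ℝ) + α + 1) = ((j:ℝ) + α + 1) := rfl
  field_simp
  rw [← hfac]
  ring

lemma integrable_poly_mul (α : ℝ) (hα : 0 < α) (m n : ℕ) :
    IntegrableOn (fun x : ℝ => lagPoly α m x * lagPoly α n x * (x ^ α * Real.exp (-x)))
      (Ioi 0) := by
  have hpt : ∀ x : ℝ, lagPoly α m x * lagPoly α n x * (x ^ α * Real.exp (-x))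
      = ∑ k ∈ Finset.range (m+1), ∑ j ∈ Finset.range (n+1),
          (lagC α m k * lagC α n j) * (x ^ k * x ^ j * (x ^ α * Real.exp (-x))) := by
    intro x
    rw [lagPoly_eq, lagPoly_eq, Finset.sum_mul_sum, Finset.sum_mul]
    apply Finset.sum_congr rfl; intro k _
    rw [Finset.sum_mul]
    apply Finset.sum_congr rfl; intro j _
    ring
  simp only [hpt]
  apply MeasureTheory.integrable_finset_sum
  intro k _
  apply MeasureTheory.integrable_finset_sum
  intro j _
  exact (integrable_pw α hα k j).const_mul _

lemma orthPoly_le (α : ℝ) (hα : 0 < α) (m n : ℕ) (hmn : m ≤ n) :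
    ∫ x in Ioi (0:ℝ), lagPoly α m x * lagPoly α n x * (x ^ α * Real.exp (-x))
      = if m = n then Real.Gamma (α + n + 1) / n.factorial else 0 := by
  have hpt : ∀ x : ℝ, lagPoly α m x * lagPoly α n x * (x ^ α * Real.exp (-x))
      = ∑ k ∈ Finset.range (m+1), ∑ j ∈ Finset.range (n+1),
          (lagC α m k * lagC α n j) * (x ^ k * x ^ j * (x ^ α * Real.exp (-x))) := by
    intro x
    rw [lagPoly_eq, lagPoly_eq, Finset.sum_mul_sum, Finset.sum_mul]
    apply Finset.sum_congr rfl; intro k _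
    rw [Finset.sum_mul]
    apply Finset.sum_congr rfl; intro j _
    ring
  have hval : ∫ x in Ioi (0:ℝ), lagPoly α m x * lagPoly α n x * (x ^ α * Real.exp (-x))
      = ∑ k ∈ Finset.range (m+1), ∑ j ∈ Finset.range (n+1),
          (lagC α m k * lagC α n j) * Real.Gamma ((k:ℝ) + j + α + 1) := by
    simp only [hpt]
    rw [MeasureTheory.integral_finset_sum _
      (fun k _ => MeasureTheory.integrable_finset_sum _
        (fun j _ => (integrable_pw α hα k j).const_mul _))]
    apply Finset.sum_congr rfl; intro k _
    rw [MeasureTheory.integral_finset_sum _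
      (fun j _ => (integrable_pw α hα k j).const_mul _)]
    apply Finset.sum_congr rfl; intro j _
    rw [MeasureTheory.integral_const_mul, integral_pw α hα k j]
  rw [hval]
  have hinner : ∀ k : ℕ, ∑ j ∈ Finset.range (n+1),
      (lagC α m k * lagC α n j) * Real.Gamma ((k:ℝ) + j + α + 1)
      = lagC α m k * (Real.Gamma (n + α + 1) / n.factorial) * altSum n k (α+1) := by
    intro k
    unfold altSum
    rw [Finset.mul_sum]
    apply Finset.sum_congr rfl; intro j hj
    have hj' : j ≤ n := Nat.lt_succ_iff.mp (Finset.mem_range.mp hj)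
    have := lagC_gamma α hα n j k hj'
    calc lagC α m k * lagC α n j * Real.Gamma ((k:ℝ) + j + α + 1)
        = lagC α m k * (lagC α n j * Real.Gamma ((k:ℝ) + j + α + 1)) := by ring
      _ = lagC α m k * (Real.Gamma (n + α + 1) / n.factorial *
            ((-1:ℝ)^j * (n.choose j) * ∏ i ∈ Finset.range k, ((α+1) + j + i))) := by rw [this]
      _ = _ := by ring
  simp only [hinner]
  rcases eq_or_lt_of_le hmn with rfl | hlt
  · rw [if_pos rfl]
    rw [Finset.sum_eq_single_of_mem m (Finset.self_mem_range_succ m)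
      (fun b hb hbm => by
        rw [altSum_of_lt m b (by
          have := Finset.mem_range.mp hb; omega) (α+1)]; ring)]
    rw [altSum_diag m (α+1)]
    unfold lagC
    have h3 : (m.factorial : ℝ) ≠ 0 := Nat.cast_ne_zero.2 m.factorial_ne_zero
    have h4 : Real.Gamma ((m:ℝ) + α + 1) ≠ 0 :=
      ne_of_gt (Real.Gamma_pos_of_pos (by positivity))
    have hcomm : Real.Gamma (α + (m:ℝ) + 1) = Real.Gamma ((m:ℝ) + α + 1) := by ring_nf
    rw [hcomm]
    simp only [Nat.sub_self, Nat.factorial_zero, Nat.cast_one, mul_one]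
    field_simp
    have hsq : (-1:ℝ)^m * (-1:ℝ)^m = 1 := by
      rw [← pow_add, ← two_mul, pow_mul]; norm_num
    linear_combination hsq
  · rw [if_neg (by omega)]
    apply Finset.sum_eq_zero
    intro k hk
    rw [altSum_of_lt n k (by have := Finset.mem_range.mp hk; omega) (α+1)]
    ring

lemma orthPoly (α : ℝ) (hα : 0 < α) (m n : ℕ) :
    ∫ x in Ioi (0:ℝ), lagPoly α m x * lagPoly α n x * (x ^ α * Real.exp (-x))
      = if m = n then Real.Gamma (α + n + 1) / n.factorial else 0 := by
  rcases le_or_gt m n with h | h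
  · exact orthPoly_le α hα m n h
  · have hsym : ∀ x : ℝ, lagPoly α m x * lagPoly α n x * (x ^ α * Real.exp (-x))
        = lagPoly α n x * lagPoly α m x * (x ^ α * Real.exp (-x)) := fun x => by ring
    simp only [hsym]
    rw [orthPoly_le α hα n m h.le, if_neg (by omega), if_neg (by omega)]

lemma lagFun_pt (α : ℝ) (m n : ℕ) (x : ℝ) :
    lagFun α m x * lagFun α n x * (x ^ α * Real.exp (-x))
    = (Real.sqrt ((m.factorial : ℝ) / Real.Gamma (α + m + 1)) *
        Real.sqrt ((n.factorial : ℝ) / Real.Gamma (α + n + 1))) *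
        (lagPoly α m x * lagPoly α n x * (x ^ α * Real.exp (-x))) := by
  unfold lagFun; ring

lemma integrable_lagFun_mul (α : ℝ) (hα : 0 < α) (m n : ℕ) :
    IntegrableOn (fun x : ℝ => lagFun α m x * lagFun α n x * (x ^ α * Real.exp (-x)))
      (Ioi 0) := by
  simp only [lagFun_pt]
  exact (integrable_poly_mul α hα m n).const_mul _

lemma orthFun (α : ℝ) (hα : 0 < α) (m n : ℕ) :
    ∫ x in Ioi (0:ℝ), lagFun α m x * lagFun α n x * (x ^ α * Real.exp (-x))
      = if m = n then 1 else 0 := by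
  simp only [lagFun_pt]
  rw [MeasureTheory.integral_const_mul, orthPoly α hα m n]
  rcases eq_or_ne m n with rfl | hne
  · rw [if_pos rfl, if_pos rfl]
    have hg : (0:ℝ) < Real.Gamma (α + m + 1) :=
      Real.Gamma_pos_of_pos (by positivity)
    have hfpos : (0:ℝ) < (m.factorial : ℝ) := by
      exact_mod_cast m.factorial_pos
    rw [Real.mul_self_sqrt (le_of_lt (div_pos hfpos hg))]
    field_simp
  · rw [if_neg hne, if_neg hne, mul_zero]

lemma coeffInt (α : ℝ) (hα : 0 < α) (N : ℕ) (c : ℕ → ℍ[ℝ]) (f : ℝ → ℍ[ℝ])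
    (hf : ∀ x, f x = ∑ n ∈ Finset.range (N + 1), (lagFun α n x : ℍ[ℝ]) * c n)
    (m : ℕ) (hm : m < N + 1) :
    (∫ x in Ioi (0:ℝ), (lagFun α m x * (x ^ α * Real.exp (-x))) • f x) = c m := by
  have hptq : ∀ x : ℝ, (lagFun α m x * (x ^ α * Real.exp (-x))) • f x
      = ∑ n ∈ Finset.range (N+1),
          (lagFun α m x * lagFun α n x * (x ^ α * Real.exp (-x))) • c n := by
    intro x
    rw [hf x, Finset.smul_sum]
    apply Finset.sum_congr rfl; intro n _
    rw [Quaternion.coe_mul_eq_smul, smul_smul]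
    congr 1
    ring
  simp only [hptq]
  rw [MeasureTheory.integral_finset_sum _
    (fun n _ => ((integrable_lagFun_mul α hα m n).smul_const (c n)))]
  have : ∀ n ∈ Finset.range (N+1),
      (∫ x in Ioi (0:ℝ), (lagFun α m x * lagFun α n x * (x ^ α * Real.exp (-x))) • c n)
      = (if m = n then (1:ℝ) else 0) • c n := by
    intro n _
    rw [integral_smul_const, orthFun α hα m n]
  rw [Finset.sum_congr rfl this]
  simp only [ite_smul, one_smul, zero_smul]
  rw [Finset.sum_ite_eq]
  simp [Finset.mem_range.mpr hm]

lemma fracT_form (α : ℝ) (hα : 0 < α) (N : ℕ) (θ : ℍ[ℝ]) (c : ℕ → ℍ[ℝ]) (f : ℝ → ℍ[ℝ])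
    (hf : ∀ x, f x = ∑ n ∈ Finset.range (N + 1), (lagFun α n x : ℍ[ℝ]) * c n) :
    ∀ y : ℝ, fracT α N θ f y
      = ∑ m ∈ Finset.range (N + 1), (lagFun α m y : ℍ[ℝ]) * (θ ^ m * c m) := by
  intro y
  unfold fracT
  apply Finset.sum_congr rfl; intro m hm
  rw [coeffInt α hα N c f hf m (Finset.mem_range.mp hm), mul_assoc]

/-- semi-group property of the fractional Hankel transforms for
commuting quaternionic parameters (i.e. parameters in a common slice). -/
theorem stmt6 (α : ℝ) (hα : 0 < α) (N : ℕ) (θ η : ℍ[ℝ]) (hcomm : θ * η = η * θ)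
    (c : ℕ → ℍ[ℝ]) (f : ℝ → ℍ[ℝ])
    (hf : ∀ x, f x = ∑ n ∈ Finset.range (N + 1), (lagFun α n x : ℍ[ℝ]) * c n) :
    ∀ y : ℝ, 0 < y →
      fracT α N θ (fracT α N η f) y = fracT α N (θ * η) f y ∧
        fracT α N (θ * η) f y = fracT α N η (fracT α N θ f) y := by
  intro y _
  have hC : Commute θ η := hcomm
  have hη := fracT_form α hα N η c f hf
  have hθ := fracT_form α hα N θ c f hf
  have hθη := fracT_form α hα N (θ * η) c f hf
  have h1 : fracT α N θ (fracT α N η f) y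
      = ∑ m ∈ Finset.range (N + 1), (lagFun α m y : ℍ[ℝ]) * (θ ^ m * (η ^ m * c m)) :=
    fracT_form α hα N θ (fun m => η ^ m * c m) (fracT α N η f) hη y
  have h2 : fracT α N η (fracT α N θ f) y
      = ∑ m ∈ Finset.range (N + 1), (lagFun α m y : ℍ[ℝ]) * (η ^ m * (θ ^ m * c m)) :=
    fracT_form α hα N η (fun m => θ ^ m * c m) (fracT α N θ f) hθ y
  constructor
  · rw [h1, hθη y]
    apply Finset.sum_congr rfl; intro m _
    rw [hC.mul_pow, mul_assoc]
  · rw [h2, hθη y]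
    apply Finset.sum_congr rfl; intro m _
    congr 1
    rw [hC.mul_pow, (hC.pow_pow m m).eq, mul_assoc]
end

section
/- Let α > 0 and let r ∈ [0,1). Then for all x, y ≥ 0 the series ∑_{m=0}^∞ (m!/Γ(m+α+1))·r^m·|L_m^{(α)}(x)|·|L_m^{(α)}(y)| converges. (Absolute convergence of the Hille–Hardy kernel series for |θ| < 1.) -/
open MeasureTheory Set Quaternion

/-! Expanding `L_m^{(α)}` and using `Γ(k+α+1) ≥ k! Γ(α+1)` and `C(m,k) ≤ m^k/k!` gives
`|L_m^{(α)}(x)| ≤ Γ(m+α+1)/(m! Γ(α+1)) ∑_k (m|x|)^k/(k!)^2`. Splitting `m|x| = (εm)(|x|/ε)`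
bounds the sum by `e^{εm} e^{|x|/ε}`, so the `m`-th term of the series is at most a constant
times `Γ(m+α+1)/m! (r e^{2ε})^m`. For `ε` small enough that `r e^{2ε} < 1` this is summable by
the ratio test, since `Γ(m+α+1)/m!` grows only polynomially. -/

open Real Finset Filter Topology
open scoped Nat

theorem factorial_mul_Gamma_le_Gamma_nat_add {α : ℝ} (hα : 0 ≤ α) (k : ℕ) :
    (k ! : ℝ) * Gamma (α + 1) ≤ Gamma (k + α + 1) := by
  induction k with
  | zero => simp
  | succ k ih =>
    rw [Nat.factorial_succ, Nat.cast_mul, Nat.cast_succ, mul_assoc,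
      show (k : ℝ) + 1 + α + 1 = (k + α + 1) + 1 by ring,
      Gamma_add_one (s := k + α + 1) (by positivity)]
    gcongr
    linarith

theorem abs_lagPoly_term_le {α : ℝ} (hα : 0 ≤ α) {m k : ℕ} (hk : k ≤ m) (x : ℝ) :
    |(-1 : ℝ) ^ k / ((k ! : ℝ) * ((m - k)! : ℝ)) * (Gamma (m + α + 1) / Gamma (k + α + 1)) *
        x ^ k| ≤
      Gamma (m + α + 1) / (m ! * Gamma (α + 1)) * ((m * |x|) ^ k / (k ! : ℝ) ^ 2) := by
  have hchoose : 1 / ((k ! : ℝ) * (m - k)!) ≤ m ^ k / k ! / m ! := by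
    have h := Nat.choose_le_pow_div (α := ℝ) k m
    rw [Nat.cast_choose ℝ hk] at h
    rwa [le_div_iff₀ (by positivity), one_div_mul_eq_div]
  calc _ = 1 / ((k ! : ℝ) * (m - k)!) * (Gamma (m + α + 1) / Gamma (k + α + 1)) * |x| ^ k := by
        simp only [abs_mul, abs_div, abs_pow, abs_neg, abs_one, one_pow]
        rw [abs_of_pos (by positivity), abs_of_pos (by positivity), abs_of_pos (by positivity),
          abs_of_pos (by positivity)]
    _ ≤ m ^ k / k ! / m ! * (Gamma (m + α + 1) / (k ! * Gamma (α + 1))) * |x| ^ k := by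
        gcongr
        exact factorial_mul_Gamma_le_Gamma_nat_add hα k
    _ = _ := by
        field_simp
        ring

theorem sum_range_mul_pow_div_factorial_sq_le {a b : ℝ} (ha : 0 ≤ a) (hb : 0 ≤ b) (n : ℕ) :
    ∑ k ∈ range n, (a * b) ^ k / (k ! : ℝ) ^ 2 ≤ exp a * exp b := by
  calc ∑ k ∈ range n, (a * b) ^ k / (k ! : ℝ) ^ 2
      = ∑ k ∈ range n, a ^ k / k ! * (b ^ k / k !) := by
        congr! 1 with k; ring
    _ ≤ ∑ k ∈ range n, exp a * (b ^ k / k !) := by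
        gcongr; exact pow_div_factorial_le_exp _ ha _
    _ ≤ exp a * exp b := by
        rw [← mul_sum]; gcongr; exact sum_le_exp_of_nonneg hb n

theorem abs_lagPoly_le {α : ℝ} (hα : 0 ≤ α) (m : ℕ) (x : ℝ) {ε : ℝ} (hε : 0 < ε) :
    |lagPoly α m x| ≤
      Gamma (m + α + 1) / (m ! * Gamma (α + 1)) * (exp ε ^ m * exp (|x| / ε)) := by
  calc |lagPoly α m x|
      ≤ ∑ k ∈ range (m + 1), Gamma (m + α + 1) / (m ! * Gamma (α + 1)) *
          ((m * |x|) ^ k / (k ! : ℝ) ^ 2) :=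
        (abs_sum_le_sum_abs _ _).trans <| sum_le_sum fun k hk =>
          abs_lagPoly_term_le hα (Nat.lt_succ_iff.mp (mem_range.mp hk)) x
    _ ≤ Gamma (m + α + 1) / (m ! * Gamma (α + 1)) * (exp ε ^ m * exp (|x| / ε)) := by
        have hmx : (m : ℝ) * |x| = ε * m * (|x| / ε) := by field_simp
        rw [← mul_sum, ← exp_nat_mul, mul_comm (m : ℝ) ε, hmx]
        gcongr
        exact sum_range_mul_pow_div_factorial_sq_le (by positivity) (by positivity) _

theorem summable_Gamma_nat_add_div_factorial_mul_pow {α q : ℝ} (hα : -1 < α) (hq : |q| < 1) :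
    Summable fun m : ℕ => Gamma (m + α + 1) / m ! * q ^ m := by
  have hpos (n : ℕ) : 0 < (n : ℝ) + α + 1 := by linarith [n.cast_nonneg (α := ℝ)]
  have hratio (n : ℕ) : Gamma ((n + 1 : ℕ) + α + 1) / (n + 1)! * q ^ (n + 1)
      = ((n + α + 1) / (n + 1)) * q * (Gamma (n + α + 1) / n ! * q ^ n) := by
    rw [Nat.cast_succ, show (n : ℝ) + 1 + α + 1 = (n + α + 1) + 1 by ring,
      Gamma_add_one (hpos n).ne', Nat.factorial_succ, Nat.cast_mul, Nat.cast_succ]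
    field_simp
    ring
  have hlim : Tendsto (fun n : ℕ => ((n + α + 1) / (n + 1)) * |q|) atTop (𝓝 |q|) := by
    have h0 := (tendsto_one_div_add_atTop_nhds_zero_nat (𝕜 := ℝ)).const_mul α
    have := (h0.const_add 1).mul_const |q|
    rw [mul_zero, add_zero, one_mul] at this
    refine this.congr fun n => ?_
    field_simp
    ring
  obtain ⟨ρ, hqρ, hρ⟩ := exists_between hq
  refine summable_of_ratio_norm_eventually_le hρ ?_
  filter_upwards [hlim.eventually (gt_mem_nhds hqρ)] with n hn
  rw [hratio, norm_mul, norm_mul, Real.norm_eq_abs q,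
    Real.norm_of_nonneg (div_pos (hpos n) (by positivity)).le]
  exact mul_le_mul_of_nonneg_right hn.le (norm_nonneg _)

theorem stmt8_general (α : ℝ) (hα : 0 < α) (r : ℝ) (hr0 : 0 ≤ r) (hr1 : r < 1)
    (x y : ℝ) :
    Summable fun m : ℕ =>
      (Nat.factorial m : ℝ) / Real.Gamma (m + α + 1) * r ^ m *
        |lagPoly α m x| * |lagPoly α m y| := by
  have hlim : Tendsto (fun ε => r * exp ε ^ 2) (𝓝[>] 0) (𝓝 r) :=
    ((by fun_prop : Continuous fun ε => r * exp ε ^ 2).tendsto' 0 r (by simp)).mono_left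
      nhdsWithin_le_nhds
  obtain ⟨ε, hε, hrε⟩ : ∃ ε > 0, r * exp ε ^ 2 < 1 :=
    (eventually_mem_nhdsWithin.and (hlim.eventually (gt_mem_nhds hr1))).exists
  have hq : |r * exp ε ^ 2| < 1 := by rwa [abs_of_nonneg (by positivity)]
  refine .of_nonneg_of_le (fun m => by positivity) (fun m => ?_)
    ((summable_Gamma_nat_add_div_factorial_mul_pow (α := α) (by linarith) hq).mul_left
      (exp (|x| / ε) * exp (|y| / ε) / Gamma (α + 1) ^ 2))
  calc _ ≤ (m ! : ℝ) / Gamma (m + α + 1) * r ^ m *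
        (Gamma (m + α + 1) / (m ! * Gamma (α + 1)) * (exp ε ^ m * exp (|x| / ε))) *
        (Gamma (m + α + 1) / (m ! * Gamma (α + 1)) * (exp ε ^ m * exp (|y| / ε))) := by
        gcongr <;> exact abs_lagPoly_le hα.le _ _ hε
    _ = _ := by field_simp; ring

/-- absolute convergence of the Hille–Hardy kernel series for
`|θ| < 1`. -/
theorem stmt8 (α : ℝ) (hα : 0 < α) (r : ℝ) (hr0 : 0 ≤ r) (hr1 : r < 1)
    (x y : ℝ) (hx : 0 ≤ x) (hy : 0 ≤ y) :
    Summable fun m : ℕ =>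
      (Nat.factorial m : ℝ) / Real.Gamma (m + α + 1) * r ^ m *
        |lagPoly α m x| * |lagPoly α m y| :=
  stmt8_general α hα r hr0 hr1 x y
end

section
/- Let α > 0, n ∈ ℕ, and z ∈ ℂ with |z| < 1. Then the function x ↦ exp(xz/(z−1))·L_n^{(α)}(x)·x^α·e^{−x} is integrable on (0,∞) and ∫₀^∞ exp(xz/(z−1))·L_n^{(α)}(x)·x^α·e^{−x} dx = (Γ(n+α+1)/n!)·z^n·(1−z)^{α+1}, where (1−z)^{α+1} is the principal-branch complex power. (Equivalently: the second Bargmann transform A^α maps the normalized Laguerre function φ_n^{α} to the normalized Bergman monomial f_n(z) = (Γ(n+α+1)/(πΓ(α)n!))^{1/2} z^n.) -/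
/-!
Expanding `L_n^{(α)}` and combining the exponentials, the integrand is a finite sum of terms
`c_k x^{k+α} e^{-x/(1-z)}`. Each is a Laplace transform of a power,
`∫₀^∞ t^{a-1} e^{-rt} dt = Γ(a) r^{-a}`, which holds for complex `r` with `Re r > 0` by analytic
continuation from `r > 0`; here `r = 1/(1-z)` has positive real part because `|z| < 1`. The
Gamma factors cancel against those in the coefficients, leaving
`(Γ(n+α+1)/n!) (1-z)^{α+1} binom(n,k) (z-1)^k`, and the binomial theorem sums these to `z^n`.
-/

open MeasureTheory Set Quaternion

open Filter Topology

lemma Real.integrableOn_rpow_mul_exp_neg_mul_Ioi {s b : ℝ} (hs : -1 < s) (hb : 0 < b) :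
    IntegrableOn (fun x : ℝ => x ^ s * Real.exp (-(b * x))) (Ioi 0) := by
  simpa [Real.rpow_one, neg_mul] using integrableOn_rpow_mul_exp_neg_mul_rpow hs zero_lt_one hb

namespace Complex

lemma inv_re_pos {w : ℂ} (hw : 0 < w.re) : 0 < w⁻¹.re := by
  rw [inv_re]
  exact div_pos hw (normSq_pos.2 fun h => by simp [h] at hw)

lemma norm_cpow_mul_exp_neg_mul {t : ℝ} (ht : 0 < t) (a r : ℂ) :
    ‖(t : ℂ) ^ a * exp (-(r * t))‖ = t ^ a.re * Real.exp (-(r.re * t)) := by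
  rw [norm_mul, norm_cpow_eq_rpow_re_of_pos ht, norm_exp]
  simp

lemma aestronglyMeasurable_cpow_mul_exp_neg_mul (a r : ℂ) :
    AEStronglyMeasurable (fun t : ℝ => (t : ℂ) ^ a * exp (-(r * t)))
      (volume.restrict (Ioi 0)) := by
  fun_prop

lemma integrableOn_cpow_mul_exp_neg_mul_Ioi {a r : ℂ} (ha : -1 < a.re) (hr : 0 < r.re) :
    IntegrableOn (fun t : ℝ => (t : ℂ) ^ a * exp (-(r * t))) (Ioi 0) := by
  refine (Real.integrableOn_rpow_mul_exp_neg_mul_Ioi ha hr).mono'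
    (aestronglyMeasurable_cpow_mul_exp_neg_mul a r) ?_
  filter_upwards [ae_restrict_mem measurableSet_Ioi] with t ht
  exact (norm_cpow_mul_exp_neg_mul ht a r).le

lemma hasDerivAt_integral_cpow_mul_exp_neg_mul_Ioi {s r : ℂ} (hs : -1 < s.re) (hr : 0 < r.re) :
    HasDerivAt (fun c : ℂ => ∫ t in Ioi (0 : ℝ), (t : ℂ) ^ s * exp (-(c * t)))
      (-∫ t in Ioi (0 : ℝ), (t : ℂ) ^ (s + 1) * exp (-(r * t))) r := by
  have hr2 : 0 < r.re / 2 := half_pos hr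
  have hre_ball : ∀ c ∈ Metric.ball r (r.re / 2), r.re / 2 ≤ c.re := fun c hc => by
    have := re_le_norm (r - c)
    rw [← dist_eq, dist_comm] at this
    simp only [sub_re] at this
    linarith [Metric.mem_ball.mp hc]
  rw [← integral_neg]
  refine (hasDerivAt_integral_of_dominated_loc_of_deriv_le
    (F' := fun c (t : ℝ) => -((t : ℂ) ^ (s + 1) * exp (-(c * t))))
    (bound := fun t : ℝ => t ^ (s.re + 1) * Real.exp (-(r.re / 2 * t)))
    (Metric.ball_mem_nhds r hr2)
    (Eventually.of_forall fun c => aestronglyMeasurable_cpow_mul_exp_neg_mul s c)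
    (integrableOn_cpow_mul_exp_neg_mul_Ioi hs hr)
    (aestronglyMeasurable_cpow_mul_exp_neg_mul (s + 1) r).neg ?_
    (Real.integrableOn_rpow_mul_exp_neg_mul_Ioi (by linarith) hr2) ?_).2
  · filter_upwards [ae_restrict_mem measurableSet_Ioi] with t ht c hc
    rw [norm_neg, norm_cpow_mul_exp_neg_mul ht, add_re, one_re]
    refine mul_le_mul_of_nonneg_left (Real.exp_le_exp.2 ?_) (Real.rpow_nonneg (le_of_lt ht) _)
    nlinarith [hre_ball c hc, mem_Ioi.mp ht]
  · filter_upwards [ae_restrict_mem measurableSet_Ioi] with t ht c _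
    have ht0 : (t : ℂ) ≠ 0 := ofReal_ne_zero.mpr (ne_of_gt ht)
    refine (((hasDerivAt_mul_const (t : ℂ)).neg.cexp).const_mul ((t : ℂ) ^ s)).congr_deriv ?_
    rw [cpow_add _ _ ht0, cpow_one, Pi.neg_apply]
    ring

lemma differentiableOn_integral_cpow_mul_exp_neg_mul_Ioi {s : ℂ} (hs : -1 < s.re) :
    DifferentiableOn ℂ (fun c : ℂ => ∫ t in Ioi (0 : ℝ), (t : ℂ) ^ s * exp (-(c * t)))
      {r | 0 < r.re} := fun _ hr =>
  (hasDerivAt_integral_cpow_mul_exp_neg_mul_Ioi hs hr).differentiableAt.differentiableWithinAt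

lemma tendsto_ofReal_nhdsGT_nhdsNE (x : ℝ) : Tendsto ((↑) : ℝ → ℂ) (𝓝[>] x) (𝓝[≠] (x : ℂ)) :=
  tendsto_nhdsWithin_iff.2 ⟨(continuous_ofReal.tendsto x).mono_left nhdsWithin_le_nhds,
    eventually_nhdsWithin_of_forall fun _ hy => by simpa using hy.ne'⟩

theorem integral_cpow_mul_exp_neg_mul_Ioi_of_re_pos {a r : ℂ} (ha : 0 < a.re) (hr : 0 < r.re) :
    ∫ t in Ioi (0 : ℝ), (t : ℂ) ^ (a - 1) * exp (-(r * t)) = (1 / r) ^ a * Gamma a := by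
  have hU : IsOpen {c : ℂ | 0 < c.re} := isOpen_lt continuous_const continuous_re
  have hlhs := (differentiableOn_integral_cpow_mul_exp_neg_mul_Ioi
    (s := a - 1) (by simpa using ha)).analyticOnNhd hU
  have hrhs : AnalyticOnNhd ℂ (fun c : ℂ => (1 / c) ^ a * Gamma a) {c | 0 < c.re} := by
    refine DifferentiableOn.analyticOnNhd (fun c hc => ?_) hU
    have hc0 : c ≠ 0 := fun h => by simp [h] at hc
    have hc' : 0 < (1 / c).re := by simpa only [one_div] using inv_re_pos hc
    exact (((differentiableAt_const 1).div differentiableAt_id hc0).cpow_const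
      (Or.inl hc')).mul_const _ |>.differentiableWithinAt
  have hreal : ∃ᶠ c in 𝓝[≠] ((1 : ℝ) : ℂ),
      (∫ t in Ioi (0 : ℝ), (t : ℂ) ^ (a - 1) * exp (-(c * t))) = (1 / c) ^ a * Gamma a :=
    (tendsto_ofReal_nhdsGT_nhdsNE 1).frequently
      (eventually_nhdsWithin_of_forall (s := Ioi (1 : ℝ)) fun x hx =>
        integral_cpow_mul_exp_neg_mul_Ioi ha (zero_lt_one.trans hx)).frequently
  exact hlhs.eqOn_of_preconnected_of_frequently_eq hrhs
    (convex_halfSpace_re_gt 0).isPreconnected (by simp) hreal hr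

end Complex

open Finset
open scoped Nat

noncomputable def lagCoeff (α : ℝ) (n k : ℕ) : ℝ :=
  (-1 : ℝ) ^ k / ((k ! : ℝ) * ((n - k)! : ℝ)) * (Real.Gamma (n + α + 1) / Real.Gamma (k + α + 1))

lemma lagPoly_eq_sum (α : ℝ) (n : ℕ) (x : ℝ) :
    lagPoly α n x = ∑ k ∈ range (n + 1), lagCoeff α n k * x ^ k := rfl

lemma lagCoeff_mul_Gamma {α : ℝ} (hα : -1 < α) {n k : ℕ} (hk : k ≤ n) :
    lagCoeff α n k * Real.Gamma (k + α + 1) =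
      Real.Gamma (n + α + 1) / n ! * ((-1) ^ k * n.choose k) := by
  have hΓ : Real.Gamma (k + α + 1) ≠ 0 :=
    (Real.Gamma_pos_of_pos (by linarith [k.cast_nonneg (α := ℝ)])).ne'
  have hfac : (k ! : ℝ) * (n - k)! * n.choose k = n ! := by
    rw [← Nat.choose_mul_factorial_mul_factorial hk]
    push_cast
    ring
  rw [lagCoeff]
  field_simp
  rw [← hfac]
  ring

lemma cexp_mul_lagPoly_mul_weight (α : ℝ) (n : ℕ) {z : ℂ} (hz : z ≠ 1) {x : ℝ} (hx : 0 < x) :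
    Complex.exp (x * z / (z - 1)) * (lagPoly α n x : ℂ) * ((x ^ α * Real.exp (-x) : ℝ) : ℂ) =
      ∑ k ∈ range (n + 1), (lagCoeff α n k : ℂ) *
        ((x : ℂ) ^ ((k + α + 1 : ℂ) - 1) * Complex.exp (-((1 - z)⁻¹ * x))) := by
  have hx0 : (x : ℂ) ≠ 0 := Complex.ofReal_ne_zero.2 hx.ne'
  have hexp : Complex.exp (x * z / (z - 1)) * Complex.exp (-x) =
      Complex.exp (-((1 - z)⁻¹ * x)) := by
    rw [← Complex.exp_add]
    congr 1
    field_simp [sub_ne_zero.2 hz, sub_ne_zero.2 hz.symm]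
    ring
  have hpow (k : ℕ) : (x : ℂ) ^ k * (x : ℂ) ^ (α : ℂ) = (x : ℂ) ^ ((k + α + 1 : ℂ) - 1) := by
    rw [add_sub_cancel_right, Complex.cpow_add _ _ hx0, Complex.cpow_natCast]
  rw [lagPoly_eq_sum, ← hexp]
  push_cast
  rw [Complex.ofReal_cpow hx.le, Finset.mul_sum, Finset.sum_mul]
  refine Finset.sum_congr rfl fun k _ => ?_
  rw [← hpow]
  ring

lemma integral_lagCoeff_term {α : ℝ} (hα : -1 < α) {n k : ℕ} (hk : k ≤ n) {w : ℂ}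
    (hw : 0 < w.re) :
    ∫ x in Ioi (0 : ℝ), (lagCoeff α n k : ℂ) *
        ((x : ℂ) ^ ((k + α + 1 : ℂ) - 1) * Complex.exp (-(w⁻¹ * x))) =
      (Real.Gamma (n + α + 1) / n ! : ℝ) * w ^ ((α : ℂ) + 1) * (n.choose k * (-w) ^ k) := by
  have hw0 : w ≠ 0 := fun h => by simp [h] at hw
  have hre : 0 < ((k : ℂ) + α + 1).re := by simp; linarith [k.cast_nonneg (α := ℝ)]
  rw [integral_const_mul, Complex.integral_cpow_mul_exp_neg_mul_Ioi_of_re_pos hre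
    (Complex.inv_re_pos hw), one_div, inv_inv, show (k + α + 1 : ℂ) = (α + 1) + k by ring,
    Complex.cpow_add _ _ hw0, Complex.cpow_natCast,
    show ((α : ℂ) + 1 + k) = ((k + α + 1 : ℝ) : ℂ) by push_cast; ring, Complex.Gamma_ofReal]
  have := congrArg ((↑) : ℝ → ℂ) (lagCoeff_mul_Gamma hα hk)
  push_cast at this
  push_cast
  rw [neg_pow]
  linear_combination (w ^ ((α : ℂ) + 1) * w ^ k) * this

/-- the second Bargmann transform maps the Laguerre functions to
the Bergman monomials: the integral `∫₀^∞ e^{xz/(z-1)} L_n^{(α)}(x) x^α e^{-x} dx`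
equals `(Γ(n+α+1)/n!)·zⁿ·(1-z)^{α+1}`. -/
theorem stmt12 (α : ℝ) (hα : 0 < α) (n : ℕ) (z : ℂ) (hz : ‖z‖ < 1) :
    IntegrableOn (fun x : ℝ =>
      Complex.exp ((x : ℂ) * z / (z - 1)) * (lagPoly α n x : ℂ) *
        ((x ^ α * Real.exp (-x) : ℝ) : ℂ)) (Ioi 0) ∧
    ∫ x in Ioi (0 : ℝ),
        Complex.exp ((x : ℂ) * z / (z - 1)) * (lagPoly α n x : ℂ) *
          ((x ^ α * Real.exp (-x) : ℝ) : ℂ) =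
      ((Real.Gamma (n + α + 1) / (Nat.factorial n : ℝ) : ℝ) : ℂ) * z ^ n *
        (1 - z) ^ ((α : ℂ) + 1) := by
  have hw : 0 < (1 - z).re := by
    have := Complex.re_le_norm z
    simp only [Complex.sub_re, Complex.one_re]
    linarith
  have hz1 : z ≠ 1 := fun h => by simp [h] at hw
  have hα' : -1 < α := by linarith
  have hterm : ∀ k ∈ range (n + 1), IntegrableOn (fun x : ℝ => (lagCoeff α n k : ℂ) *
      ((x : ℂ) ^ ((k + α + 1 : ℂ) - 1) * Complex.exp (-((1 - z)⁻¹ * x)))) (Ioi 0) := fun k _ =>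
    (Complex.integrableOn_cpow_mul_exp_neg_mul_Ioi (by simp; linarith [k.cast_nonneg (α := ℝ)])
      (Complex.inv_re_pos hw)).const_mul _
  have hexpand := fun x (hx : x ∈ Ioi (0 : ℝ)) => cexp_mul_lagPoly_mul_weight α n hz1 hx
  have hbinom : ∑ k ∈ range (n + 1), (n.choose k : ℂ) * (-(1 - z)) ^ k = z ^ n := by
    simpa [mul_comm] using (add_pow (-(1 - z)) 1 n).symm
  refine ⟨IntegrableOn.congr_fun (integrable_finsetSum _ hterm) (fun x hx => (hexpand x hx).symm)
    measurableSet_Ioi, ?_⟩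
  rw [setIntegral_congr_fun measurableSet_Ioi hexpand, integral_finsetSum _ hterm,
    Finset.sum_congr rfl fun k hk => integral_lagCoeff_term hα' (mem_range_succ_iff.1 hk) hw,
    ← Finset.mul_sum, hbinom]
  ring
end
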